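/- arXiv:2211.01715 — 3 statements merged into one kernel-verified Lean document; each statement's English description precedes it below -/
import Mathlib

section
/- Let n ≥ 2 be an integer and let R > 0 and M be real numbers with M > 4(n! − 1)R. For i = 1,…,n−1 let v_i ∈ ℝ^n be a vector with ‖v_i − l_i(M)‖_∞ < R (in the paper v_i = Log(g_i) for totally positive units g_i chosen with their logarithms in these balls). Let S be the n×n real matrix whose first n−1 rows are v₁,…,v_{n−1} and whose last row is the all-ones vector (1,…,1). Then (−1)^{n−1}·det(S) > 0, i.e. sign(det S) = (−1)^{n−1}. -/
/-- The vector `l_i(M) ∈ ℝ^n` whose `(i+1)`-st coordinate (0-based coordinate `i`)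
is `M` and whose other coordinates all equal `−M/(n−1)`. -/
noncomputable def lvec (n : ℕ) (M : ℝ) (i : ℕ) : Fin n → ℝ :=
  fun j => if (j : ℕ) = i then M else -M / ((n : ℝ) - 1)

/-!
Adding all columns of `S` to the first one replaces it by the row sums. Since every `l_i(M)`
has coordinate sum `0`, these are smaller than `nR` in the first `n − 1` rows, and the last
row becomes `(n, 1, …, 1)`. The new matrix is strictly row dominant along the cyclic
permutation `σ : i ↦ i + 1`: row `i < n − 1` is dominated by its entry `≈ M` in column
`i + 1` (the other entries are `≈ −M/(n−1)`, now only `n − 2` of them), and the last row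
by its entry `n` in column `0`. Such a matrix `A` has `sign σ · det A > 0`: deforming the
permuted matrix to its diagonal through dominant, hence nonsingular, matrices does not
change the sign of the determinant.
-/

open Finset

namespace Matrix

variable {ι : Type*} [Fintype ι] [DecidableEq ι]

theorem det_pos_of_sum_row_lt_diag {A : Matrix ι ι ℝ}
    (h : ∀ i, ∑ j ∈ univ.erase i, |A i j| < A i i) : 0 < A.det := by
  have hdiag : ∀ i, 0 < A i i := fun i => (sum_nonneg fun j _ => abs_nonneg _).trans_lt (h i)
  let B : ℝ → Matrix ι ι ℝ := fun t => of fun i j => if i = j then A i j else t * A i j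
  have hB_ne : ∀ t ∈ Set.Icc (0 : ℝ) 1, (B t).det ≠ 0 := by
    intro t ⟨ht0, ht1⟩
    refine det_ne_zero_of_sum_row_lt_diag fun i => ?_
    calc ∑ j ∈ univ.erase i, ‖B t i j‖ ≤ ∑ j ∈ univ.erase i, |A i j| := by
          refine sum_le_sum fun j hj => ?_
          simp only [B, of_apply, if_neg (mem_erase.1 hj).1.symm, Real.norm_eq_abs, abs_mul,
            abs_of_nonneg ht0]
          exact mul_le_of_le_one_left (abs_nonneg _) ht1
      _ < A i i := h i
      _ = ‖B t i i‖ := by simp [B, abs_of_pos (hdiag i)]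
  have hB_cont : Continuous fun t => (B t).det := by
    refine Continuous.matrix_det (continuous_matrix fun i j => ?_)
    by_cases hij : i = j <;> simp only [B, of_apply, hij, if_true, if_false] <;> fun_prop
  have hB_zero : B 0 = diagonal fun i => A i i := by
    ext i j
    by_cases hij : i = j <;> simp [B, hij]
  have hB_one : B 1 = A := by
    ext i j
    by_cases hij : i = j <;> simp [B, hij]
  have h0 : 0 < (B 0).det := by
    rw [hB_zero, det_diagonal]
    exact prod_pos fun i _ => hdiag i
  by_contra hA
  obtain ⟨t, ht, hzero⟩ := intermediate_value_Icc' zero_le_one hB_cont.continuousOn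
    ⟨by rw [hB_one]; exact not_lt.1 hA, h0.le⟩
  exact hB_ne t ht hzero

theorem sign_mul_det_pos_of_sum_row_lt (σ : Equiv.Perm ι) {A : Matrix ι ι ℝ}
    (h : ∀ i, ∑ j ∈ univ.erase (σ i), |A i j| < A i (σ i)) :
    0 < (Equiv.Perm.sign σ : ℝ) * A.det := by
  rw [← det_permute']
  refine det_pos_of_sum_row_lt_diag fun i => ?_
  simp only [submatrix_apply, id]
  rw [sum_erase_eq_sub (mem_univ _), Equiv.sum_comp σ fun j => |A i j|,
    ← sum_erase_eq_sub (mem_univ _)]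
  exact h i

end Matrix

theorem sum_lvec {n : ℕ} (hn : n ≠ 0) (M : ℝ) (k : Fin (n + 1)) :
    ∑ j, lvec (n + 1) M k j = 0 := by
  have hoff : ∀ j ∈ univ.erase k, lvec (n + 1) M k j = -M / n := by
    intro j hj
    simp [lvec, Fin.val_inj, (mem_erase.1 hj).1]
  rw [← add_sum_erase _ _ (mem_univ k), sum_congr rfl hoff, sum_const,
    card_erase_of_mem (mem_univ k), card_univ, Fintype.card_fin, Nat.add_sub_cancel, nsmul_eq_mul]
  simp only [lvec, if_true]
  field_simp
  ring

section NearLvec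

variable {n : ℕ} {R M : ℝ} {w : Fin (n + 1) → ℝ} {k : Fin (n + 1)}

theorem abs_sub_lvec_lt (hw : ‖w - lvec (n + 1) M k‖ < R) (j : Fin (n + 1)) :
    |w j - lvec (n + 1) M k j| < R :=
  (norm_le_pi_norm (w - lvec (n + 1) M k) j).trans_lt hw

theorem sub_lt_apply_of_norm_sub_lvec_lt (hw : ‖w - lvec (n + 1) M k‖ < R) : M - R < w k := by
  have hwk := abs_sub_lvec_lt hw k
  simp only [lvec, if_true] at hwk
  linarith [(abs_lt.1 hwk).1]

theorem abs_apply_lt_of_norm_sub_lvec_lt (hM : 0 ≤ M) (hw : ‖w - lvec (n + 1) M k‖ < R)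
    {j : Fin (n + 1)} (hj : j ≠ k) : |w j| < M / n + R := by
  have hwj := abs_sub_lvec_lt hw j
  simp only [lvec, if_neg (Fin.val_ne_of_ne hj), Nat.cast_add, Nat.cast_one,
    add_sub_cancel_right, neg_div] at hwj
  obtain ⟨hwj_lower, hwj_upper⟩ := abs_lt.1 hwj
  have hMn : 0 ≤ M / n := by positivity
  exact abs_lt.2 ⟨by linarith, by linarith⟩

theorem abs_sum_lt_of_norm_sub_lvec_lt (hn : n ≠ 0) (hw : ‖w - lvec (n + 1) M k‖ < R) :
    |∑ i, w i| < (n + 1) * R := by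
  have hsub : ∑ i, w i = ∑ i, (w i - lvec (n + 1) M k i) := by
    rw [sum_sub_distrib, sum_lvec hn, sub_zero]
  calc |∑ i, w i| ≤ ∑ i, |w i - lvec (n + 1) M k i| := hsub ▸ abs_sum_le_sum_abs _ _
    _ < ∑ _i : Fin (n + 1), R :=
        sum_lt_sum_of_nonempty univ_nonempty fun i _ => abs_sub_lvec_lt hw i
    _ = (n + 1) * R := by simp

theorem sum_abs_update_lt_of_norm_sub_lvec_lt (hM : n * (2 * n + 1) * R ≤ M) (hk : k ≠ 0)
    (hw : ‖w - lvec (n + 1) M k‖ < R) :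
    ∑ j ∈ univ.erase k, |Function.update w 0 (∑ i, w i) j| < w k := by
  have hn : n ≠ 0 := by
    rintro rfl
    exact hk (Subsingleton.elim (α := Fin 1) _ _)
  have hn_pos : (0 : ℝ) < n := by positivity
  have hR : 0 < R := (norm_nonneg _).trans_lt hw
  have hM0 : 0 ≤ M := le_trans (by positivity) hM
  have h0 : (0 : Fin (n + 1)) ∈ univ.erase k := mem_erase.2 ⟨hk.symm, mem_univ _⟩
  have hrest : ∑ j ∈ (univ.erase k).erase 0, |Function.update w 0 (∑ i, w i) j|
      ≤ (n - 1) * (M / n + R) := by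
    calc _ = ∑ j ∈ (univ.erase k).erase 0, |w j| :=
          sum_congr rfl fun j hj => by rw [Function.update_of_ne (mem_erase.1 hj).1]
      _ ≤ _ := sum_le_card_nsmul _ _ _ fun j hj =>
          (abs_apply_lt_of_norm_sub_lvec_lt hM0 hw (mem_erase.1 (mem_of_mem_erase hj)).1).le
      _ = (n - 1) * (M / n + R) := by
          rw [card_erase_of_mem h0, card_erase_of_mem (mem_univ _), card_univ, Fintype.card_fin,
            nsmul_eq_mul, Nat.add_sub_cancel, Nat.cast_sub (Nat.one_le_iff_ne_zero.2 hn)]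
          simp
  have hexpand : ((n : ℝ) - 1) * (M / n + R) = M - M / n + (n - 1) * R := by
    field_simp
  have hMn : (2 * n + 1) * R ≤ M / n := by
    rw [le_div_iff₀ hn_pos]
    linarith
  rw [← add_sum_erase _ _ h0, Function.update_self]
  linarith [abs_sum_lt_of_norm_sub_lvec_lt hn hw, sub_lt_apply_of_norm_sub_lvec_lt hw]

end NearLvec

theorem cast_mul_two_mul_add_one_le_four_mul_factorial_sub_one (n : ℕ) :
    (n : ℝ) * (2 * n + 1) ≤ 4 * ((n + 1).factorial - 1) := by
  have h1 := Nat.factorial_pos n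
  have h2 := Nat.self_le_factorial n
  have h : n * (2 * n + 1) + 4 ≤ 4 * (n + 1).factorial := by
    rw [Nat.factorial_succ]
    nlinarith
  have := (Nat.cast_le (α := ℝ)).2 h
  push_cast at this
  linarith

theorem sign_mul_det_pos_of_rows_near_lvec {n : ℕ} {R M : ℝ} (hM : n * (2 * n + 1) * R ≤ M)
    {S : Matrix (Fin (n + 1)) (Fin (n + 1)) ℝ} (hlast : S (Fin.last n) = fun _ => 1)
    (hrows : ∀ t : Fin n, ‖S t.castSucc - lvec (n + 1) M t.succ‖ < R) :
    0 < (-1 : ℝ) ^ n * S.det := by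
  set A := S.updateCol 0 fun i => ∑ j, S i j
  have hA_det : A.det = S.det := by
    simpa using Matrix.det_updateCol_sum S 0 fun _ => 1
  have hA_row : ∀ i, A i = Function.update (S i) 0 (∑ j, S i j) := by
    intro i
    ext j
    simp [A, Matrix.updateCol_apply, Function.update_apply]
  suffices hdom :
      ∀ i, ∑ j ∈ univ.erase (finRotate (n + 1) i), |A i j| < A i (finRotate (n + 1) i) by
    simpa [sign_finRotate, hA_det] using Matrix.sign_mul_det_pos_of_sum_row_lt _ hdom
  intro i
  simp only [hA_row]
  induction i using Fin.lastCases with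
  | last =>
    rw [finRotate_last, hlast, Function.update_self,
      sum_congr rfl fun j hj => by rw [Function.update_of_ne (mem_erase.1 hj).1]]
    simp
  | cast t =>
    have hrot : finRotate (n + 1) t.castSucc = t.succ :=
      Fin.ext (coe_finRotate_of_ne_last (Fin.castSucc_ne_last t))
    rw [hrot, Function.update_of_ne (Fin.succ_ne_zero t)]
    exact sum_abs_update_lt_of_norm_sub_lvec_lt hM (Fin.succ_ne_zero t) (hrows t)

theorem statement1_general (n : ℕ) (R M : ℝ) (hR : 0 < R)
    (hM : 4 * ((n.factorial : ℝ) - 1) * R < M)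
    (v : Fin (n - 1) → Fin n → ℝ)
    (hv : ∀ t : Fin (n - 1), ‖v t - lvec n M ((t : ℕ) + 1)‖ < R) :
    0 < (-1 : ℝ) ^ (n - 1) *
      (Matrix.of fun i j : Fin n =>
        if h : (i : ℕ) < n - 1 then v ⟨(i : ℕ), h⟩ j else 1).det := by
  cases n with
  | zero => simp
  | succ n =>
  refine sign_mul_det_pos_of_rows_near_lvec (n := n) (R := R) (M := M) ?_ ?_ fun t => ?_
  · exact (mul_le_mul_of_nonneg_right
      (cast_mul_two_mul_add_one_le_four_mul_factorial_sub_one n) hR.le).trans hM.le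
  · ext j
    simp
  · convert hv t using 2
    ext j
    simp

/-- Let `n ≥ 2`, `R > 0` and `M > 4(n!−1)R`.  If `v₁,…,v_{n−1} ∈ ℝ^n` satisfy
`‖vᵢ − l_i(M)‖_∞ < R`, and `S` is the `n × n` matrix whose first `n−1` rows are
`v₁,…,v_{n−1}` and whose last row is `(1,…,1)`, then `(−1)^{n−1}·det S > 0`. -/
theorem statement1 (n : ℕ) (hn : 2 ≤ n) (R M : ℝ) (hR : 0 < R)
    (hM : 4 * ((n.factorial : ℝ) - 1) * R < M)
    (v : Fin (n - 1) → Fin n → ℝ)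
    (hv : ∀ t : Fin (n - 1), ‖v t - lvec n M ((t : ℕ) + 1)‖ < R) :
    0 < (-1 : ℝ) ^ (n - 1) *
      (Matrix.of fun i j : Fin n =>
        if h : (i : ℕ) < n - 1 then v ⟨(i : ℕ), h⟩ j else 1).det :=
  statement1_general n R M hR hM v hv
end

section
/- Let X₁ be a discrete topological space, X₂ a totally disconnected Hausdorff topological space, and A a locally profinite abelian group (i.e. a locally compact Hausdorff totally disconnected topological abelian group). Then the ℤ-linear map C_c(X₁, ℤ) ⊗_ℤ C_c^⋄(X₂, A) → C_c^⋄(X₁ × X₂, A) determined by sending f ⊗ g to the function (x₁, x₂) ↦ f(x₁)·g(x₂) (the f(x₁)-fold multiple of g(x₂) in A) is a well-defined isomorphism of abelian groups. -/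
/-! For discrete `X₁`, `C_c(X₁, ℤ)` is the free abelian group `X₁ →₀ ℤ`, so the tensor product is
`X₁ →₀ C_c^⋄(X₂, A)`. A function in `C_c^⋄(X₁ × X₂, A)` is determined by its slices `h (x, ·)`,
which lie in `C_c^⋄(X₂, A)` and vanish for all but finitely many `x`. Composed with the slice map,
`f ⊗ g ↦ f • g` becomes that identification, and the slice map is injective, so the product map is
bijective. -/

open scoped TensorProduct

/-- `C_c(X, B)`: the additive group of continuous compactly supported maps `X → B`. -/
def CcSet (X : Type) [TopologicalSpace X] (B : Type) [TopologicalSpace B]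
    [AddCommGroup B] [IsTopologicalAddGroup B] : AddSubgroup (X → B) where
  carrier := {f | Continuous f ∧ HasCompactSupport f}
  zero_mem' := by
    refine ⟨continuous_const, ?_⟩
    have h : tsupport (0 : X → B) = ∅ := by
      simp [tsupport, Function.support_zero]
    rw [HasCompactSupport, h]
    exact isCompact_empty
  add_mem' := fun hf hg => ⟨hf.1.add hg.1, hf.2.add hg.2⟩
  neg_mem' := fun hf => ⟨hf.1.neg, hf.2.neg⟩

/-- `C_c^⋄(X, A)`: the subgroup of `C_c(X, A)` generated by the locally constant maps
with compact support together with the continuous compactly supported maps taking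
values in a compact open subgroup `K` of `A`. -/
def CcDiamond (X : Type) [TopologicalSpace X] (A : Type) [TopologicalSpace A]
    [AddCommGroup A] [IsTopologicalAddGroup A] : AddSubgroup (X → A) :=
  AddSubgroup.closure
    ({f : X → A | IsLocallyConstant f ∧ HasCompactSupport f} ∪
      {f : X → A | Continuous f ∧ HasCompactSupport f ∧
        ∃ K : AddSubgroup A, IsCompact (K : Set A) ∧ IsOpen (K : Set A) ∧
          ∀ x, f x ∈ K})

theorem ccDiamond_le_ccSet {X : Type} [TopologicalSpace X] {A : Type} [AddCommGroup A]
    [TopologicalSpace A] [IsTopologicalAddGroup A] : CcDiamond X A ≤ CcSet X A := by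
  refine (AddSubgroup.closure_le _).2 ?_
  rintro f (⟨hlc, hcs⟩ | ⟨hc, hcs, -⟩)
  exacts [⟨hlc.continuous, hcs⟩, ⟨hc, hcs⟩]

section Product

variable {X₁ : Type} [TopologicalSpace X₁] {X₂ : Type} [TopologicalSpace X₂] {A : Type}
  [AddCommGroup A]

theorem HasCompactSupport.prod_smul {f : X₁ → ℤ} (hf : HasCompactSupport f) {g : X₂ → A}
    (hg : HasCompactSupport g) : HasCompactSupport fun p : X₁ × X₂ => f p.1 • g p.2 := by
  refine HasCompactSupport.intro' (hf.prod hg) ((isClosed_tsupport f).prod (isClosed_tsupport g))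
    fun p hp => ?_
  rcases not_and_or.1 hp with h | h
  · simp [image_eq_zero_of_notMem_tsupport h]
  · simp [image_eq_zero_of_notMem_tsupport h]

theorem HasCompactSupport.comp_prodMk_left [T1Space X₁] {h : X₁ × X₂ → A}
    (hh : HasCompactSupport h) (x : X₁) : HasCompactSupport fun y => h (x, y) := by
  have hslice : Prod.mk x ⁻¹' tsupport h = Prod.snd '' (tsupport h ∩ {x} ×ˢ Set.univ) := by
    ext y
    simp
  have hK : IsCompact (Prod.mk x ⁻¹' tsupport h) := hslice ▸
    (hh.inter_right (isClosed_singleton.prod isClosed_univ)).image continuous_snd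
  exact hK.of_isClosed_subset (isClosed_tsupport _)
    (tsupport_comp_subset_preimage h (Continuous.prodMk_right x))

variable [TopologicalSpace A] [IsTopologicalAddGroup A]

theorem smul_mem_ccDiamond {f : X₁ → ℤ} (hf : f ∈ CcSet X₁ ℤ) {g : X₂ → A}
    (hg : g ∈ CcDiamond X₂ A) : (fun p : X₁ × X₂ => f p.1 • g p.2) ∈ CcDiamond (X₁ × X₂) A := by
  let φ : (X₂ → A) →+ (X₁ × X₂ → A) :=
    { toFun := fun g p => f p.1 • g p.2
      map_zero' := by funext p; simp
      map_add' := fun a b => by funext p; simp [smul_add] }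
  suffices CcDiamond X₂ A ≤ (CcDiamond (X₁ × X₂) A).comap φ from this hg
  refine (AddSubgroup.closure_le _).2 fun g hg => AddSubgroup.subset_closure ?_
  have hf₁ : IsLocallyConstant fun p : X₁ × X₂ => f p.1 :=
    (IsLocallyConstant.iff_continuous f).2 hf.1 |>.comp_continuous continuous_fst
  rcases hg with ⟨hlc, hcs⟩ | ⟨hc, hcs, K, hKc, hKo, hK⟩
  · exact Or.inl ⟨hf₁.comp₂ (hlc.comp_continuous continuous_snd) (· • ·), hf.2.prod_smul hcs⟩
  · exact Or.inr ⟨hf₁.continuous.smul (hc.comp continuous_snd), hf.2.prod_smul hcs, K, hKc, hKo,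
      fun p => K.zsmul_mem (hK p.2) _⟩

theorem comp_prodMk_left_mem_ccDiamond [T1Space X₁] {h : X₁ × X₂ → A}
    (hh : h ∈ CcDiamond (X₁ × X₂) A) (x : X₁) : (fun y => h (x, y)) ∈ CcDiamond X₂ A := by
  let φ : (X₁ × X₂ → A) →+ (X₂ → A) :=
    { toFun := fun h y => h (x, y)
      map_zero' := rfl
      map_add' := fun _ _ => rfl }
  suffices CcDiamond (X₁ × X₂) A ≤ (CcDiamond X₂ A).comap φ from this hh
  refine (AddSubgroup.closure_le _).2 fun h hh => AddSubgroup.subset_closure ?_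
  rcases hh with ⟨hlc, hcs⟩ | ⟨hc, hcs, K, hKc, hKo, hK⟩
  · exact Or.inl ⟨hlc.comp_continuous (Continuous.prodMk_right x), hcs.comp_prodMk_left x⟩
  · exact Or.inr ⟨hc.comp (Continuous.prodMk_right x), hcs.comp_prodMk_left x, K, hKc, hKo,
      fun y => hK (x, y)⟩

variable (X₁ X₂ A)

noncomputable def ccDiamondProd :
    CcSet X₁ ℤ ⊗[ℤ] CcDiamond X₂ A →ₗ[ℤ] CcDiamond (X₁ × X₂) A :=
  TensorProduct.lift <| LinearMap.mk₂ ℤ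
    (fun f g => ⟨fun p => (f : X₁ → ℤ) p.1 • (g : X₂ → A) p.2, smul_mem_ccDiamond f.2 g.2⟩)
    (fun _ _ _ => Subtype.ext <| funext fun _ => add_smul ..)
    (fun _ _ _ => Subtype.ext <| funext fun _ => mul_smul ..)
    (fun _ _ _ => Subtype.ext <| funext fun _ => smul_add ..)
    (fun n f g => Subtype.ext <| funext fun p => smul_comm ((f : X₁ → ℤ) p.1) n ((g : X₂ → A) p.2))

theorem ccDiamondProd_tmul (f : CcSet X₁ ℤ) (g : CcDiamond X₂ A) (p : X₁ × X₂) :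
    (ccDiamondProd X₁ X₂ A (f ⊗ₜ[ℤ] g) : X₁ × X₂ → A) p = (f : X₁ → ℤ) p.1 • (g : X₂ → A) p.2 :=
  rfl

end Product

section Discrete

variable (X₁ : Type) [TopologicalSpace X₁] [DiscreteTopology X₁] (X₂ : Type)
  [TopologicalSpace X₂] (A : Type) [AddCommGroup A] [TopologicalSpace A]
  [IsTopologicalAddGroup A]

noncomputable def ccSetIntEquivFinsupp : CcSet X₁ ℤ ≃ₗ[ℤ] (X₁ →₀ ℤ) where
  toFun f := Finsupp.ofSupportFinite f (f.2.2.finite_of_discrete.subset (subset_tsupport _))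
  invFun l := ⟨l, continuous_of_discreteTopology, by
    rw [HasCompactSupport, tsupport, (isClosed_discrete _).closure_eq]
    exact Set.Finite.isCompact l.hasFiniteSupport⟩
  map_add' _ _ := by ext; rfl
  map_smul' _ _ := by ext; rfl
  left_inv _ := rfl
  right_inv _ := by ext; rfl

@[simp]
theorem ccSetIntEquivFinsupp_apply (f : CcSet X₁ ℤ) (x : X₁) :
    ccSetIntEquivFinsupp X₁ f x = (f : X₁ → ℤ) x :=
  rfl

/-- Only finitely many slices of `h` are nonzero since `fst '' tsupport h` is compact in the
discrete space `X₁`. -/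
noncomputable def ccDiamondSlices : CcDiamond (X₁ × X₂) A →ₗ[ℤ] (X₁ →₀ CcDiamond X₂ A) where
  toFun h := Finsupp.ofSupportFinite
    (fun x => ⟨fun y => (h : X₁ × X₂ → A) (x, y), comp_prodMk_left_mem_ccDiamond h.2 x⟩)
    ((ccDiamond_le_ccSet h.2).2.image continuous_fst |>.finite_of_discrete.subset
      fun x hx => by
        obtain ⟨y, hy⟩ := Function.ne_iff.1 (Subtype.coe_ne_coe.2 hx)
        exact ⟨(x, y), subset_tsupport _ hy, rfl⟩)
  map_add' _ _ := by ext; rfl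
  map_smul' _ _ := by ext; rfl

@[simp]
theorem ccDiamondSlices_apply (h : CcDiamond (X₁ × X₂) A) (x : X₁) (y : X₂) :
    (ccDiamondSlices X₁ X₂ A h x : X₂ → A) y = (h : X₁ × X₂ → A) (x, y) := by
  rw [ccDiamondSlices, LinearMap.coe_mk, AddHom.coe_mk, Finsupp.ofSupportFinite_coe]

theorem ccDiamondSlices_injective : Function.Injective (ccDiamondSlices X₁ X₂ A) := by
  intro h h' hh
  ext p
  simpa using congrArg (fun l : X₁ →₀ CcDiamond X₂ A => (l p.1 : X₂ → A) p.2) hh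

theorem ccDiamondSlices_ccDiamondProd [DecidableEq X₁] (t : CcSet X₁ ℤ ⊗[ℤ] CcDiamond X₂ A) :
    ccDiamondSlices X₁ X₂ A (ccDiamondProd X₁ X₂ A t) =
      TensorProduct.finsuppScalarLeft ℤ (CcDiamond X₂ A) X₁
        ((ccSetIntEquivFinsupp X₁).rTensor (CcDiamond X₂ A) t) := by
  induction t using TensorProduct.induction_on with
  | zero => simp only [map_zero]
  | tmul f g =>
    ext x y
    simp [ccDiamondProd_tmul]
  | add t t' ht ht' => simp only [map_add, ht, ht']

end Discrete

theorem statement7_general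
    (X₁ : Type) [TopologicalSpace X₁] [DiscreteTopology X₁]
    (X₂ : Type) [TopologicalSpace X₂]
    (A : Type) [AddCommGroup A] [TopologicalSpace A] [IsTopologicalAddGroup A] :
    ∃ Φ : (CcSet X₁ ℤ) ⊗[ℤ] (CcDiamond X₂ A) →ₗ[ℤ] CcDiamond (X₁ × X₂) A,
      (∀ (f : CcSet X₁ ℤ) (g : CcDiamond X₂ A) (x : X₁ × X₂),
        ((Φ (f ⊗ₜ[ℤ] g) : X₁ × X₂ → A) x) = (f : X₁ → ℤ) x.1 • (g : X₂ → A) x.2) ∧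
      Function.Bijective Φ := by
  classical
  refine ⟨ccDiamondProd X₁ X₂ A, ccDiamondProd_tmul X₁ X₂ A, ?_⟩
  refine Function.Bijective.of_comp_left ?_ (ccDiamondSlices_injective X₁ X₂ A)
  convert (((ccSetIntEquivFinsupp X₁).rTensor (CcDiamond X₂ A)).trans
    (TensorProduct.finsuppScalarLeft ℤ (CcDiamond X₂ A) X₁)).bijective using 1
  exact funext (ccDiamondSlices_ccDiamondProd X₁ X₂ A)

/-- for `X₁` discrete, `X₂` totally disconnected Hausdorff, and `A` a
locally profinite abelian group, the `ℤ`-linear map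
`C_c(X₁, ℤ) ⊗_ℤ C_c^⋄(X₂, A) → C_c^⋄(X₁ × X₂, A)` determined by
`f ⊗ g ↦ ((x₁, x₂) ↦ f(x₁) • g(x₂))` is a well-defined isomorphism of abelian
groups. -/
theorem statement7
    (X₁ : Type) [TopologicalSpace X₁] [DiscreteTopology X₁]
    (X₂ : Type) [TopologicalSpace X₂] [T2Space X₂] [TotallyDisconnectedSpace X₂]
    (A : Type) [AddCommGroup A] [TopologicalSpace A] [IsTopologicalAddGroup A]
    [LocallyCompactSpace A] [T2Space A] [TotallyDisconnectedSpace A] :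
    ∃ Φ : (CcSet X₁ ℤ) ⊗[ℤ] (CcDiamond X₂ A) →ₗ[ℤ] CcDiamond (X₁ × X₂) A,
      (∀ (f : CcSet X₁ ℤ) (g : CcDiamond X₂ A) (x : X₁ × X₂),
        ((Φ (f ⊗ₜ[ℤ] g) : X₁ × X₂ → A) x) = (f : X₁ → ℤ) x.1 • (g : X₂ → A) x.2) ∧
      Function.Bijective Φ :=
  statement7_general X₁ X₂ A
end

section
/- For every integer n ≥ 2, one has (n/(n−1) − 1/(2(n! − 1)))^{n−1} − (1/2)·(n/(n−1) + 1/(2(n! − 1)))^{n−2} > 0. -/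
/-! Put `a = n/(n-1) - ε` and `b = n/(n-1) + ε` with `ε = 1/(2(n! - 1))`, so that
`b = a + 1/(n! - 1) ≤ a · n!/(n! - 1)` because `a ≥ 1`. Since `2(n-2) ≤ n!`, Bernoulli's inequality
gives `(n!/(n! - 1))^(n-2) ≤ 2`, hence `b^(n-2) ≤ 2 a^(n-2) < 2 a^(n-1)`. -/

open Nat

theorem two_mul_le_factorial_add_two (k : ℕ) : 2 * k ≤ (k + 2)! := by
  have h : k + 1 ≤ (k + 1)! := Nat.self_le_factorial _
  rw [Nat.factorial_succ]
  nlinarith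

theorem pow_le_two_mul_sub_one_pow {F : ℝ} {k : ℕ} (hF : 1 ≤ F) (hk : 2 * k ≤ F) :
    F ^ k ≤ 2 * (F - 1) ^ k := by
  have hF0 : 0 < F := by linarith
  have hbern : 1 + k * (-(1 / F)) ≤ (1 + -(1 / F)) ^ k :=
    one_add_mul_le_pow (by rw [neg_le_neg_iff, div_le_iff₀ hF0]; linarith) k
  have hhalf : 1 / 2 ≤ 1 + k * (-(1 / F)) := by
    have : (k : ℝ) / F ≤ 1 / 2 := by rw [div_le_iff₀ hF0]; linarith
    linarith [show (k : ℝ) * (-(1 / F)) = -(k / F) by ring]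
  have hquot : (1 + -(1 / F)) ^ k = (F - 1) ^ k / F ^ k := by
    rw [← div_pow]; field_simp; ring
  rw [hquot, le_div_iff₀ (by positivity)] at hbern
  nlinarith [mul_le_mul_of_nonneg_right hhalf (pow_pos hF0 k).le]

theorem add_inv_sub_one_pow_le {a F : ℝ} {k : ℕ} (ha : 1 ≤ a) (hF : 1 < F) (hk : 2 * k ≤ F) :
    (a + 1 / (F - 1)) ^ k ≤ 2 * a ^ k := by
  have hF1 : 0 < F - 1 := by linarith
  have hle : a + 1 / (F - 1) ≤ a * (F / (F - 1)) := by
    rw [show a * (F / (F - 1)) = a + a / (F - 1) by field_simp; ring]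
    gcongr
  calc (a + 1 / (F - 1)) ^ k ≤ a ^ k * (F ^ k / (F - 1) ^ k) := by
        rw [← div_pow, ← mul_pow]; gcongr
    _ ≤ a ^ k * 2 := by
        gcongr
        rw [div_le_iff₀ (by positivity)]
        linarith [pow_le_two_mul_sub_one_pow hF.le hk]
    _ = 2 * a ^ k := mul_comm _ _

theorem pow_sub_half_mul_pow_pos {N F : ℝ} {k : ℕ} (hN : 2 ≤ N) (hNF : N ≤ F) (hk : 2 * k ≤ F) :
    0 < (N / (N - 1) - 1 / (2 * (F - 1))) ^ (k + 1)
        - 1 / 2 * (N / (N - 1) + 1 / (2 * (F - 1))) ^ k := by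
  have hN1 : N - 1 ≠ 0 := by linarith
  have hF1 : F - 1 ≠ 0 := by linarith
  have hb : N / (N - 1) + 1 / (2 * (F - 1))
      = (N / (N - 1) - 1 / (2 * (F - 1))) + 1 / (F - 1) := by
    field_simp; ring
  have ha : 1 < N / (N - 1) - 1 / (2 * (F - 1)) := by
    have h : 1 / (2 * (F - 1)) < 1 / (N - 1) := by gcongr <;> linarith
    have : N / (N - 1) = 1 + 1 / (N - 1) := by field_simp; ring
    linarith
  rw [hb]
  linarith [add_inv_sub_one_pow_le ha.le (by linarith) hk, pow_lt_pow_right₀ ha (lt_add_one k)]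

/-- For every integer `n ≥ 2`,
`(n/(n−1) − 1/(2(n!−1)))^(n−1) − (1/2)(n/(n−1) + 1/(2(n!−1)))^(n−2) > 0`. -/
theorem statement8 (n : ℕ) (hn : 2 ≤ n) :
    0 < ((n : ℝ) / ((n : ℝ) - 1) - 1 / (2 * ((n.factorial : ℝ) - 1))) ^ (n - 1)
        - (1 / 2) * ((n : ℝ) / ((n : ℝ) - 1) + 1 / (2 * ((n.factorial : ℝ) - 1))) ^ (n - 2) := by
  obtain ⟨k, rfl⟩ := Nat.exists_eq_add_of_le' hn
  rw [show k + 2 - 1 = k + 1 by omega, Nat.add_sub_cancel]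
  refine pow_sub_half_mul_pow_pos (by exact_mod_cast hn) ?_ ?_
  · exact_mod_cast Nat.self_le_factorial _
  · exact_mod_cast two_mul_le_factorial_add_two k
end
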